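/- Let λ, μ be real numbers with λ ≥ 1 and λ + μ > 1, and let n be a natural number. Then for every z in the open unit disc 𝕌 the function 𝕎_{λ,μ}(z) is nonzero for z ≠ 0 and Re((𝕎_{λ,μ})_n(z)/𝕎_{λ,μ}(z)) ≥ (2(λ+μ)−1)/(2(λ+μ)), where at z = 0 the ratio is understood as its analytic extension with value 1. -/

import Mathlib

/-- The second normalized Wright function
`𝕎_{λ,μ}(z) = z + ∑_{m=1}^∞ (Γ(λ+μ)/((m+1)! Γ(λm+λ+μ))) z^{m+1}`. -/
noncomputable def normWright2 (lam mu : ℝ) (z : ℂ) : ℂ :=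
  ∑' m : ℕ,
    ((Real.Gamma (lam + mu) / (Nat.factorial (m + 1) * Real.Gamma (lam * m + lam + mu)) : ℝ) : ℂ)
      * z ^ (m + 1)

/-- The `n`-th partial sum
`(𝕎_{λ,μ})_n(z) = z + ∑_{m=1}^n (Γ(λ+μ)/((m+1)! Γ(λm+λ+μ))) z^{m+1}`. -/
noncomputable def normWright2Partial (lam mu : ℝ) (n : ℕ) (z : ℂ) : ℂ :=
  ∑ m ∈ Finset.range (n + 1),
    ((Real.Gamma (lam + mu) / (Nat.factorial (m + 1) * Real.Gamma (lam * m + lam + mu)) : ℝ) : ℂ)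
      * z ^ (m + 1)

/-!
Write `𝕎_{λ,μ}(z) = P + T` with `P = (𝕎_{λ,μ})_n(z)` and `T` the tail. The coefficient `c_m` of
`z^{m+1}` is at most `(2(λ+μ))^{-m}`, because `(m+1)! ≥ 2^m` and
`Γ(λm+λ+μ) ≥ Γ(m+λ+μ) ≥ (λ+μ)^m Γ(λ+μ)`. So for `0 < |z| < 1` the leading term `z` dominates:
with `k = 2(λ+μ) - 1 ≥ 1`, `k ∑_{m ≥ 1} |c_m z^{m+1}| < |z|`, hence `k |T| < |P|`. In particular
`P + T ≠ 0`, and since `t ↦ 1/(1+t)` maps the disc `|t| ≤ 1/k` into the half-plane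
`Re ≥ k/(k+1)`, we get `Re(P/(P+T)) ≥ k/(k+1)`.
-/

open Finset

lemma Complex.le_re_div_add_of_mul_norm_le {p t : ℂ} {k : ℝ} (hk : 1 ≤ k)
    (h : k * ‖t‖ ≤ ‖p‖) (hpt : p + t ≠ 0) : k / (k + 1) ≤ (p / (p + t)).re := by
  set u := p / (p + t)
  have hu : k * ‖1 - u‖ ≤ ‖u‖ := by
    have h1u : 1 - u = t / (p + t) := by
      rw [eq_div_iff hpt, sub_mul, div_mul_cancel₀ _ hpt]; ring
    rw [h1u, norm_div, norm_div, ← mul_div_assoc]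
    exact div_le_div_of_nonneg_right h (norm_nonneg _)
  have hsq : k ^ 2 * ((1 - u.re) * (1 - u.re) + u.im * u.im) ≤ u.re * u.re + u.im * u.im := by
    have := pow_le_pow_left₀ (by positivity) hu 2
    rwa [mul_pow, Complex.sq_norm, Complex.sq_norm, Complex.normSq_apply,
      Complex.normSq_apply, Complex.sub_re, Complex.sub_im, Complex.one_re,
      Complex.one_im, zero_sub, neg_mul_neg] at this
  have hre : k ^ 2 * (1 - u.re) ^ 2 ≤ u.re ^ 2 := by
    nlinarith [mul_nonneg (by nlinarith : 0 ≤ k ^ 2 - 1) (sq_nonneg u.im)]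
  rw [div_le_iff₀ (by linarith)]
  by_contra! hlt
  have hd : 0 < k * (1 - u.re) + u.re := by nlinarith
  nlinarith [mul_pos (by linarith : 0 < k * (1 - u.re) - u.re) hd]

lemma mul_norm_tsum_nat_add_lt_norm_sum_range {E : Type*} [SeminormedAddCommGroup E] {f : ℕ → E}
    (hf : Summable fun m ↦ ‖f m‖) {k : ℝ} (hk : 1 ≤ k) (h : k * ∑' m, ‖f (m + 1)‖ < ‖f 0‖) (n : ℕ) :
    k * ‖∑' m, f (m + (n + 1))‖ < ‖∑ m ∈ range (n + 1), f m‖ := by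
  set H := ∑ m ∈ range n, ‖f (m + 1)‖
  set R := ∑' m, ‖f (m + (n + 1))‖
  have hsplit : H + R = ∑' m, ‖f (m + 1)‖ :=
    ((summable_nat_add_iff 1).mpr hf).sum_add_tsum_nat_add n
  have hP : ‖f 0‖ - H ≤ ‖∑ m ∈ range (n + 1), f m‖ := by
    rw [sum_range_succ']
    have := norm_sum_le (range n) fun m ↦ f (m + 1)
    have := norm_sub_norm_le (f 0) (-∑ m ∈ range n, f (m + 1))
    rw [sub_neg_eq_add, norm_neg, add_comm] at this
    linarith
  have hT : ‖∑' m, f (m + (n + 1))‖ ≤ R :=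
    norm_tsum_le_tsum_norm ((summable_nat_add_iff (n + 1)).mpr hf)
  have hH : 0 ≤ H := sum_nonneg fun m _ ↦ norm_nonneg _
  nlinarith

lemma mul_tsum_succ_lt_of_le_geometric {a : ℕ → ℝ} {r x k : ℝ} (ha0 : ∀ m, 0 ≤ a m)
    (ha : ∀ m, a m ≤ r * x ^ m) (hk : 0 ≤ k) (hr : 0 < r) (hx : 0 ≤ x) (hkx : (k + 1) * x < 1) :
    k * ∑' m, a (m + 1) < r := by
  have hx1 : x < 1 := by nlinarith
  have hgeo := summable_geometric_of_lt_one hx hx1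
  have hsum : ∑' m, a (m + 1) ≤ r * x * (1 - x)⁻¹ := by
    rw [← tsum_geometric_of_lt_one hx hx1, ← tsum_mul_left]
    refine Summable.tsum_le_tsum (fun m ↦ ?_) ?_ (hgeo.mul_left _)
    · simpa only [pow_succ', mul_assoc] using ha (m + 1)
    · exact (hgeo.mul_left (r * x)).of_nonneg_of_le (fun m ↦ ha0 _)
        fun m ↦ by simpa only [pow_succ', mul_assoc] using ha (m + 1)
  calc k * ∑' m, a (m + 1) ≤ k * (r * x * (1 - x)⁻¹) := mul_le_mul_of_nonneg_left hsum hk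
    _ < r := by
      rw [← div_eq_mul_inv, mul_div_assoc', div_lt_iff₀ (by linarith)]
      nlinarith

lemma Real.pow_mul_Gamma_le_Gamma_nat_add {s : ℝ} (hs : 0 < s) :
    ∀ k : ℕ, s ^ k * Gamma s ≤ Gamma (k + s)
  | 0 => by simp
  | k + 1 => by
    have hks : 0 < k + s := by positivity
    calc s ^ (k + 1) * Gamma s = s * (s ^ k * Gamma s) := by ring
      _ ≤ (k + s) * Gamma (k + s) := by
        refine mul_le_mul (by linarith [k.cast_nonneg (α := ℝ)])
          (pow_mul_Gamma_le_Gamma_nat_add hs k) ?_ hks.le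
        exact (mul_pos (pow_pos hs k) (Gamma_pos_of_pos hs)).le
      _ = Gamma ((k + 1 : ℕ) + s) := by
        rw [← Gamma_add_one hks.ne']; push_cast; ring_nf

section WrightCoeff

variable {lam mu : ℝ}

/-- The coefficient `c_m` of `z ^ (m + 1)` in `normWright2 lam mu z`. -/
noncomputable def wrightCoeff (lam mu : ℝ) (m : ℕ) : ℝ :=
  Real.Gamma (lam + mu) / (Nat.factorial (m + 1) * Real.Gamma (lam * m + lam + mu))

lemma wrightCoeff_zero (hs : 0 < lam + mu) : wrightCoeff lam mu 0 = 1 := by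
  simp [wrightCoeff, (Real.Gamma_pos_of_pos hs).ne']

lemma wrightCoeff_nonneg (hlam : 0 ≤ lam) (hs : 0 < lam + mu) (m : ℕ) :
    0 ≤ wrightCoeff lam mu m := by
  have : 0 < lam * m + lam + mu := by nlinarith [(m.cast_nonneg : (0 : ℝ) ≤ m)]
  unfold wrightCoeff
  have := Real.Gamma_pos_of_pos this
  have := Real.Gamma_pos_of_pos hs
  positivity

lemma wrightCoeff_le (hlam : 1 ≤ lam) (hs : 1 ≤ lam + mu) (m : ℕ) :
    wrightCoeff lam mu m ≤ (2 * (lam + mu))⁻¹ ^ m := by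
  set s := lam + mu
  have hΓs : 0 < Real.Gamma s := Real.Gamma_pos_of_pos (by linarith)
  have hfact : (2 : ℝ) ^ m ≤ (m + 1).factorial := by
    have := @Nat.factorial_mul_pow_le_factorial 1 m
    rw [Nat.factorial_one, one_mul, add_comm 1 m] at this
    exact_mod_cast this
  have hmono : Real.Gamma (m + s) ≤ Real.Gamma (lam * m + lam + mu) := by
    rcases Nat.eq_zero_or_pos m with rfl | hm
    · simp [s]
    · have hm1 : (1 : ℝ) ≤ m := by exact_mod_cast hm
      refine Real.Gamma_strictMonoOn_Ici.monotoneOn ?_ ?_ ?_ <;>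
        simp only [Set.mem_Ici, s] <;> nlinarith
  have hden :
      2 ^ m * (s ^ m * Real.Gamma s) ≤ (m + 1).factorial * Real.Gamma (lam * m + lam + mu) :=
    mul_le_mul hfact ((Real.pow_mul_Gamma_le_Gamma_nat_add (by linarith) m).trans hmono)
      (by positivity) (by positivity)
  calc wrightCoeff lam mu m ≤ Real.Gamma s / (2 ^ m * (s ^ m * Real.Gamma s)) :=
        div_le_div_of_nonneg_left hΓs.le (by positivity) hden
    _ = (2 * s)⁻¹ ^ m := by rw [inv_pow, mul_pow]; field_simp

lemma norm_wrightCoeff_mul_pow_le (hlam : 1 ≤ lam) (hs : 1 ≤ lam + mu) (z : ℂ) (m : ℕ) :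
    ‖(wrightCoeff lam mu m : ℂ) * z ^ (m + 1)‖ ≤ ‖z‖ * (‖z‖ / (2 * (lam + mu))) ^ m := by
  rw [norm_mul, Complex.norm_real, Real.norm_of_nonneg (wrightCoeff_nonneg (by linarith)
    (by linarith) m), norm_pow, div_eq_mul_inv, mul_pow, pow_succ', mul_left_comm,
    mul_comm _ (_ ^ m)]
  gcongr
  exact wrightCoeff_le hlam hs m

lemma summable_norm_wrightCoeff_mul_pow (hlam : 1 ≤ lam) (hs : 1 ≤ lam + mu) {z : ℂ}
    (hz : ‖z‖ < 1) : Summable fun m ↦ ‖(wrightCoeff lam mu m : ℂ) * z ^ (m + 1)‖ :=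
  ((summable_geometric_of_lt_one (by positivity)
    (by rw [div_lt_one (by linarith)]; linarith)).mul_left ‖z‖).of_nonneg_of_le
      (fun _ ↦ norm_nonneg _) (norm_wrightCoeff_mul_pow_le hlam hs z)

lemma mul_tsum_norm_wrightCoeff_mul_pow_succ_lt (hlam : 1 ≤ lam) (hs : 1 < lam + mu) {z : ℂ}
    (hz : ‖z‖ < 1) (hz0 : z ≠ 0) :
    (2 * (lam + mu) - 1) * ∑' m, ‖(wrightCoeff lam mu (m + 1) : ℂ) * z ^ (m + 1 + 1)‖ < ‖z‖ := by
  refine mul_tsum_succ_lt_of_le_geometric (fun _ ↦ norm_nonneg _)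
    (norm_wrightCoeff_mul_pow_le hlam hs.le z) (by linarith) (norm_pos_iff.2 hz0)
    (by positivity) ?_
  rwa [sub_add_cancel, mul_div_cancel₀ _ (by linarith)]

end WrightCoeff

/-- If `λ ≥ 1` and `λ + μ > 1`, then on the open unit disc `𝕎_{λ,μ}` is nonzero away
from `0`, and `Re((𝕎_{λ,μ})_n(z)/𝕎_{λ,μ}(z)) ≥ (2(λ+μ)-1)/(2(λ+μ))`, the ratio being
understood as its analytic extension, with value `1`, at `z = 0`. -/
theorem re_partial_div_normWright2 (lam mu : ℝ) (hlam : 1 ≤ lam) (hmu : 1 < lam + mu) (n : ℕ) :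
    ∀ z : ℂ, ‖z‖ < 1 →
      (z ≠ 0 → normWright2 lam mu z ≠ 0) ∧
      (2 * (lam + mu) - 1) / (2 * (lam + mu)) ≤
        (if z = 0 then (1 : ℂ)
          else normWright2Partial lam mu n z / normWright2 lam mu z).re := by
  intro z hz
  by_cases hz0 : z = 0
  · subst hz0
    simpa using (div_le_one (by linarith)).2 (by linarith)
  have hsum := summable_norm_wrightCoeff_mul_pow hlam hmu.le hz
  set T := ∑' m, (wrightCoeff lam mu (m + (n + 1)) : ℂ) * z ^ (m + (n + 1) + 1)
  have hdom : (2 * (lam + mu) - 1) * ‖T‖ < ‖normWright2Partial lam mu n z‖ := by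
    refine mul_norm_tsum_nat_add_lt_norm_sum_range hsum (by linarith) ?_ n
    simpa [wrightCoeff_zero (by linarith : 0 < lam + mu)] using
      mul_tsum_norm_wrightCoeff_mul_pow_succ_lt hlam hmu hz hz0
  have hsplit : normWright2 lam mu z = normWright2Partial lam mu n z + T :=
    (hsum.of_norm.sum_add_tsum_nat_add (n + 1)).symm
  have hne : normWright2 lam mu z ≠ 0 := by
    rw [hsplit, Ne, add_eq_zero_iff_eq_neg]
    intro h
    rw [h, norm_neg] at hdom
    nlinarith [norm_nonneg T]
  refine ⟨fun _ ↦ hne, ?_⟩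
  rw [if_neg hz0, hsplit]
  convert Complex.le_re_div_add_of_mul_norm_le (by linarith) hdom.le (hsplit ▸ hne) using 1
  ring
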